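/- arXiv:2210.07114 — 2 statements merged into one kernel-verified Lean document; each statement's English description precedes it below -/
import Mathlib

section
/- Gill's lemma: Suppose X_n(s) → f(s) in probability as n → ∞ for each s ∈ [0,τ], where f is a deterministic Lebesgue-integrable function on [0,τ]. Suppose additionally that for every δ > 0 there exists an integrable function k_δ ≥ 0 on [0,τ] with liminf_n P(|X_n(s)| ≤ k_δ(s) for all s ∈ [0,τ]) ≥ 1 − δ. Then sup_{t ∈ [0,τ]} |∫_0^t X_n(s) ds − ∫_0^t f(s) ds| → 0 in probability. -/
/-!
On the event `Aₙ = {|Xₙ| ≤ k_δ on [0, τ]}`, every `|∫₀ᵗ Xₙ - ∫₀ᵗ f|` is bounded by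
`Iₙ = ∫_{[0,τ]} min(|Xₙ - f|, |k_δ| + |f|)`. For each `s` the truncated deviation is bounded and
tends to `0` in probability, so its expectation tends to `0`; by Tonelli and dominated convergence
`E Iₙ → 0`, and Markov's inequality gives `P(Iₙ ≥ ε) → 0`. Since `t ↦ ∫₀ᵗ Xₙ` is continuous,
the event `{sup_t |…| > ε}` is determined by a countable dense set of times, hence null-measurable,
and its probability is at most `1 - P(Aₙ) + P(Iₙ ≥ ε)`, whose `limsup` is at most `δ`.
-/

open MeasureTheory Filter
open scoped ENNReal Topology

section

variable {Ω : Type*} [MeasurableSpace Ω] {μ : Measure Ω}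

-- An unbounded or empty `⨆` in `ℝ` takes the junk value `0`.
lemma Real.exists_lt_of_lt_biSup {ι : Type*} {s : Set ι} {g : ι → ℝ} {c : ℝ} (hc : 0 ≤ c)
    (h : c < ⨆ t ∈ s, g t) : ∃ t ∈ s, c < g t := by
  by_contra! hle
  exact h.not_ge (Real.iSup_le (fun t => Real.iSup_le (hle t) hc) hc)

lemma enorm_intervalIntegral_le_setLIntegral_Icc {E : Type*} [NormedAddCommGroup E]
    [NormedSpace ℝ E] {g : ℝ → E} {a b t : ℝ} (ht : t ∈ Set.Icc a b) :
    ‖∫ s in a..t, g s‖ₑ ≤ ∫⁻ s in Set.Icc a b, ‖g s‖ₑ := by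
  rw [intervalIntegral.integral_of_le ht.1]
  exact (enorm_integral_le_lintegral_enorm _).trans
    (lintegral_mono_set (Set.Ioc_subset_Icc_self.trans (Set.Icc_subset_Icc_right ht.2)))

lemma continuousOn_intervalIntegral_Icc {g : ℝ → ℝ} {a b : ℝ}
    (hg : IntegrableOn g (Set.Icc a b)) :
    ContinuousOn (fun t => ∫ s in a..t, g s) (Set.Icc a b) :=
  (intervalIntegral.continuousOn_primitive hg).congr fun _ ht =>
    intervalIntegral.integral_of_le ht.1

lemma measurable_intervalIntegral_of_uncurry {Y : ℝ → Ω → ℝ}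
    (hY : Measurable (Function.uncurry Y)) (a t : ℝ) :
    Measurable fun ω => ∫ s in a..t, Y s ω :=
  (hY.stronglyMeasurable.integral_prod_left.sub
    hY.stronglyMeasurable.integral_prod_left).measurable

lemma nullMeasurableSet_exists_lt_of_continuous {T : Type*} [TopologicalSpace T]
    [TopologicalSpace.SeparableSpace T] {g : T → Ω → ℝ} (hg : ∀ t, Measurable (g t))
    (hcont : ∀ᵐ ω ∂μ, Continuous fun t => g t ω) (c : ℝ) :
    NullMeasurableSet {ω | ∃ t, c < g t ω} μ := by
  obtain ⟨D, hD_count, hD_dense⟩ := TopologicalSpace.exists_countable_dense T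
  have hD_meas : MeasurableSet (⋃ t ∈ D, {ω | c < g t ω}) :=
    .biUnion hD_count fun t _ => measurableSet_lt measurable_const (hg t)
  refine hD_meas.nullMeasurableSet.congr ?_
  filter_upwards [hcont] with ω hω
  refine propext ⟨fun h => ?_, fun ⟨t, ht⟩ => ?_⟩
  · obtain ⟨t, -, ht⟩ := Set.mem_iUnion₂.1 h
    exact ⟨t, ht⟩
  · obtain ⟨t', ht'D, ht'⟩ := hD_dense.exists_mem_open (isOpen_lt continuous_const hω) ⟨t, ht⟩
    exact Set.mem_iUnion₂.2 ⟨t', ht'D, ht'⟩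

lemma measure_le_one_sub_add [IsProbabilityMeasure μ] {A E M : Set Ω}
    (hE : NullMeasurableSet E μ) (h : (A ∩ E : Set Ω) ≤ᵐ[μ] M) : μ E ≤ 1 - μ A + μ M := by
  have hAE : μ A + μ E ≤ 1 + μ M := calc
    μ A + μ E = μ (A ∪ E) + μ (A ∩ E) := (measure_union_add_inter₀ A hE).symm
    _ ≤ 1 + μ M := add_le_add prob_le_one (measure_mono_ae h)
  calc μ E ≤ 1 + μ M - μ A := ENNReal.le_sub_of_add_le_left (measure_ne_top μ A) hAE
    _ ≤ 1 - μ A + μ M := add_tsub_le_tsub_add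

lemma tendsto_measure_le_of_tendsto_lintegral {ι : Type*} {l : Filter ι} {F : ι → Ω → ℝ≥0∞}
    (hF : ∀ i, AEMeasurable (F i) μ) (h : Tendsto (fun i => ∫⁻ ω, F i ω ∂μ) l (𝓝 0))
    {c : ℝ≥0∞} (hc : c ≠ 0) (hc' : c ≠ ∞) :
    Tendsto (fun i => μ {ω | c ≤ F i ω}) l (𝓝 0) := by
  have hdiv : Tendsto (fun i => (∫⁻ ω, F i ω ∂μ) / c) l (𝓝 0) := by
    simpa using ENNReal.Tendsto.div_const h (Or.inr hc)
  exact tendsto_of_tendsto_of_tendsto_of_le_of_le tendsto_const_nhds hdiv (fun _ => bot_le)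
    fun i => meas_ge_le_lintegral_div (hF i) hc hc'

lemma tendsto_lintegral_min_enorm_of_tendsto_measure [IsFiniteMeasure μ] {ι : Type*}
    {l : Filter ι} {Y : ι → Ω → ℝ}
    (hY : ∀ ε > (0 : ℝ), Tendsto (fun i => μ {ω | ε < |Y i ω|}) l (𝓝 0))
    {c : ℝ≥0∞} (hc : c ≠ ∞) :
    Tendsto (fun i => ∫⁻ ω, min ‖Y i ω‖ₑ c ∂μ) l (𝓝 0) := by
  refine ENNReal.tendsto_nhds_zero.2 fun θ hθ => ?_
  have hsmall : Tendsto (fun ε : ℝ => ENNReal.ofReal ε * μ Set.univ) (𝓝[>] 0) (𝓝 0) := by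
    have h := ENNReal.Tendsto.mul_const (ENNReal.tendsto_ofReal (tendsto_id (x := 𝓝 (0 : ℝ))))
      (Or.inr (measure_ne_top μ Set.univ))
    simpa using h.mono_left nhdsWithin_le_nhds
  obtain ⟨ε, hεθ, hε⟩ := ((hsmall.eventually_lt_const hθ).and self_mem_nhdsWithin).exists
  have hbound : ∀ i, ∫⁻ ω, min ‖Y i ω‖ₑ c ∂μ
      ≤ ENNReal.ofReal ε * μ Set.univ + c * μ {ω | ε < |Y i ω|} := fun i => calc
    ∫⁻ ω, min ‖Y i ω‖ₑ c ∂μ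
        ≤ ∫⁻ ω, ENNReal.ofReal ε + {ω | ε < |Y i ω|}.indicator (fun _ => c) ω ∂μ := by
      refine lintegral_mono fun ω => ?_
      by_cases h : ε < |Y i ω|
      · simp [h]
      · rw [Set.indicator_of_notMem (show ω ∉ {ω | ε < |Y i ω|} from h), add_zero,
          Real.enorm_eq_ofReal_abs]
        exact min_le_of_left_le (ENNReal.ofReal_le_ofReal (not_lt.1 h))
    _ ≤ ENNReal.ofReal ε * μ Set.univ + c * μ {ω | ε < |Y i ω|} := by
      rw [lintegral_add_left measurable_const, lintegral_const]
      gcongr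
      exact lintegral_indicator_const_le _ _
  have hlim : Tendsto (fun i => ENNReal.ofReal ε * μ Set.univ + c * μ {ω | ε < |Y i ω|}) l
      (𝓝 (ENNReal.ofReal ε * μ Set.univ)) := by
    simpa using tendsto_const_nhds.add (ENNReal.Tendsto.const_mul (hY ε hε) (Or.inr hc))
  filter_upwards [hlim.eventually_lt_const hεθ] with i hi using (hbound i).trans hi.le

lemma tendsto_lintegral_lintegral_min_enorm [IsFiniteMeasure μ] {α : Type*} [MeasurableSpace α]
    {ν : Measure α} [SFinite ν] {Y : ℕ → α → Ω → ℝ}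
    (hY : ∀ n, AEMeasurable (Function.uncurry (Y n)) (ν.prod μ))
    (hconv : ∀ᵐ s ∂ν, ∀ ε > (0 : ℝ), Tendsto (fun n => μ {ω | ε < |Y n s ω|}) atTop (𝓝 0))
    {C : α → ℝ≥0∞} (hC : AEMeasurable C ν) (hC_int : ∫⁻ s, C s ∂ν ≠ ∞) :
    Tendsto (fun n => ∫⁻ ω, ∫⁻ s, min ‖Y n s ω‖ₑ (C s) ∂ν ∂μ) atTop (𝓝 0) := by
  have hG : ∀ n, AEMeasurable (Function.uncurry fun s ω => min ‖Y n s ω‖ₑ (C s)) (ν.prod μ) :=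
    fun n => (hY n).enorm.min hC.comp_fst
  have hlim : ∀ᵐ s ∂ν, Tendsto (fun n => ∫⁻ ω, min ‖Y n s ω‖ₑ (C s) ∂μ) atTop (𝓝 0) := by
    filter_upwards [hconv, ae_lt_top' hC hC_int] with s hs hCs
    exact tendsto_lintegral_min_enorm_of_tendsto_measure hs hCs.ne
  have hdom : ∀ n, ∀ᵐ s ∂ν, ∫⁻ ω, min ‖Y n s ω‖ₑ (C s) ∂μ ≤ C s * μ Set.univ := fun n =>
    ae_of_all _ fun s => (lintegral_mono fun ω => min_le_right _ _).trans_eq (lintegral_const _)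
  have hdom_int : ∫⁻ s, C s * μ Set.univ ∂ν ≠ ∞ := by
    rw [lintegral_mul_const' _ _ (measure_ne_top μ _)]
    exact ENNReal.mul_ne_top hC_int (measure_ne_top μ _)
  refine (tendsto_congr fun n => lintegral_lintegral_swap (hG n)).1 ?_
  simpa using tendsto_lintegral_of_dominated_convergence' _
    (fun n => (hG n).lintegral_prod_right') hdom hdom_int hlim

lemma tendsto_measure_le_lintegral_min_enorm_sub [IsFiniteMeasure μ] {α : Type*}
    [MeasurableSpace α] {ν : Measure α} [SFinite ν] {X : ℕ → α → Ω → ℝ} {f k : α → ℝ}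
    (hX : ∀ n, Measurable (Function.uncurry (X n))) (hf : Integrable f ν) (hk : Integrable k ν)
    (hconv : ∀ᵐ s ∂ν, ∀ ε > (0 : ℝ), Tendsto (fun n => μ {ω | ε < |X n s ω - f s|}) atTop (𝓝 0))
    {ε : ℝ} (hε : 0 < ε) :
    Tendsto (fun n => μ {ω | ENNReal.ofReal ε ≤
      ∫⁻ s, min ‖X n s ω - f s‖ₑ (‖k s‖ₑ + ‖f s‖ₑ) ∂ν}) atTop (𝓝 0) := by
  have hY : ∀ n, AEMeasurable (Function.uncurry fun s ω => X n s ω - f s) (ν.prod μ) :=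
    fun n => (hX n).aemeasurable.sub hf.aemeasurable.comp_fst
  have hC : AEMeasurable (fun s => ‖k s‖ₑ + ‖f s‖ₑ) ν :=
    hk.aemeasurable.enorm.add hf.aemeasurable.enorm
  have hC_int : ∫⁻ s, ‖k s‖ₑ + ‖f s‖ₑ ∂ν ≠ ∞ := by
    rw [lintegral_add_left' hk.aemeasurable.enorm]
    exact ENNReal.add_ne_top.2 ⟨hk.2.ne, hf.2.ne⟩
  exact tendsto_measure_le_of_tendsto_lintegral
    (fun n => ((hY n).enorm.min hC.comp_fst).lintegral_prod_left')
    (tendsto_lintegral_lintegral_min_enorm hY hconv hC hC_int)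
    (ENNReal.ofReal_pos.2 hε).ne' ENNReal.ofReal_ne_top

lemma measure_lt_iSup_abs_sub_intervalIntegral_le [IsProbabilityMeasure μ] {Y : ℝ → Ω → ℝ}
    {f k : ℝ → ℝ} {a b ε : ℝ} (hε : 0 ≤ ε) (hY : Measurable (Function.uncurry Y))
    (hY_int : ∀ᵐ ω ∂μ, IntegrableOn (fun s => Y s ω) (Set.Icc a b))
    (hf : IntegrableOn f (Set.Icc a b)) :
    μ {ω | ε < ⨆ t ∈ Set.Icc a b, |(∫ s in a..t, Y s ω) - ∫ s in a..t, f s|}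
      ≤ 1 - μ {ω | ∀ s ∈ Set.Icc a b, |Y s ω| ≤ k s}
        + μ {ω | ENNReal.ofReal ε ≤ ∫⁻ s in Set.Icc a b, min ‖Y s ω - f s‖ₑ (‖k s‖ₑ + ‖f s‖ₑ)} := by
  set D : Set.Icc a b → Ω → ℝ := fun t ω => |(∫ s in a..t, Y s ω) - ∫ s in a..t, f s|
  have hD_meas : ∀ t, Measurable (D t) := fun t =>
    ((measurable_intervalIntegral_of_uncurry hY a t).sub_const _).abs
  have hD_cont : ∀ᵐ ω ∂μ, Continuous fun t => D t ω := by
    filter_upwards [hY_int] with ω hω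
    exact (continuousOn_iff_continuous_domRestrict.1 ((continuousOn_intervalIntegral_Icc hω).sub
      (continuousOn_intervalIntegral_Icc hf))).abs
  refine (measure_mono fun ω hω => ?_).trans
    (measure_le_one_sub_add (nullMeasurableSet_exists_lt_of_continuous hD_meas hD_cont ε) ?_)
  · obtain ⟨t, ht, hεt⟩ := Real.exists_lt_of_lt_biSup hε hω
    exact ⟨⟨t, ht⟩, hεt⟩
  filter_upwards [hY_int] with ω hω ⟨hωk, ⟨t, ht⟩, hεt⟩
  have htrunc : ∀ s ∈ Set.Icc a b, min ‖Y s ω - f s‖ₑ (‖k s‖ₑ + ‖f s‖ₑ) = ‖Y s ω - f s‖ₑ := by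
    intro s hs
    refine min_eq_left ((enorm_sub_le).trans (add_le_add_left ?_ _))
    rw [Real.enorm_eq_ofReal_abs, Real.enorm_eq_ofReal_abs]
    exact ENNReal.ofReal_le_ofReal ((hωk s hs).trans (le_abs_self _))
  have hsub : Set.uIcc a t ⊆ Set.Icc a b := by
    rw [Set.uIcc_of_le ht.1]
    exact Set.Icc_subset_Icc_right ht.2
  calc ENNReal.ofReal ε ≤ ‖∫ s in a..t, (Y s ω - f s)‖ₑ := by
        rw [intervalIntegral.integral_sub (hω.mono_set hsub).intervalIntegrable
          (hf.mono_set hsub).intervalIntegrable, Real.enorm_eq_ofReal_abs]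
        exact ENNReal.ofReal_le_ofReal hεt.le
    _ ≤ ∫⁻ s in Set.Icc a b, ‖Y s ω - f s‖ₑ := enorm_intervalIntegral_le_setLIntegral_Icc ht
    _ = _ := (setLIntegral_congr_fun measurableSet_Icc htrunc).symm

end

theorem gill_lemma_general
    {Ω : Type*} [MeasurableSpace Ω] (μ : Measure Ω) [IsProbabilityMeasure μ]
    (τ : ℝ)
    (X : ℕ → ℝ → Ω → ℝ) (f : ℝ → ℝ)
    (hX_meas : ∀ n, Measurable (Function.uncurry (X n)))
    (hX_int : ∀ n, ∀ᵐ ω ∂μ, IntegrableOn (fun s => X n s ω) (Set.Icc 0 τ))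
    (hf_int : IntegrableOn f (Set.Icc 0 τ))
    (hconv : ∀ s ∈ Set.Icc (0:ℝ) τ, ∀ ε > (0:ℝ),
      Tendsto (fun n => μ {ω | ε < |X n s ω - f s|}) atTop (nhds 0))
    (hdom : ∀ δ > (0:ℝ), ∃ k : ℝ → ℝ,
      IntegrableOn k (Set.Icc 0 τ) ∧ (∀ s, 0 ≤ k s) ∧
      (1 : ENNReal) - ENNReal.ofReal δ ≤
        atTop.liminf (fun n => μ {ω | ∀ s ∈ Set.Icc (0:ℝ) τ, |X n s ω| ≤ k s})) :
    ∀ ε > (0:ℝ), Tendsto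
      (fun n => μ {ω | ε < ⨆ t ∈ Set.Icc (0:ℝ) τ,
          |(∫ s in (0:ℝ)..t, X n s ω) - ∫ s in (0:ℝ)..t, f s|})
      atTop (nhds 0) := by
  intro ε hε
  refine tendsto_of_le_liminf_of_limsup_le bot_le
    (ENNReal.le_of_forall_pos_le_add fun δ hδ _ => ?_)
  obtain ⟨k, hk_int, -, hA⟩ := hdom δ hδ
  have hM := tendsto_measure_le_lintegral_min_enorm_sub (μ := μ) hX_meas hf_int hk_int
    ((ae_restrict_iff' measurableSet_Icc).2 (ae_of_all _ hconv)) hε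
  calc limsup _ atTop
      ≤ limsup (fun n => 1 - μ {ω | ∀ s ∈ Set.Icc (0:ℝ) τ, |X n s ω| ≤ k s} + _) atTop :=
        limsup_le_limsup (.of_forall fun n =>
          measure_lt_iSup_abs_sub_intervalIntegral_le hε.le (hX_meas n) (hX_int n) hf_int)
    _ = 1 - liminf (fun n => μ {ω | ∀ s ∈ Set.Icc (0:ℝ) τ, |X n s ω| ≤ k s}) atTop :=
        (ENNReal.limsup_add_of_right_tendsto_zero hM _).trans
          (ENNReal.limsup_const_sub _ _ ENNReal.one_ne_top)
    _ ≤ 1 - (1 - ENNReal.ofReal δ) := tsub_le_tsub_left hA 1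
    _ ≤ 0 + δ := by
        rw [zero_add, ← ENNReal.ofReal_coe_nnreal]
        exact tsub_tsub_le

/-- Gill's lemma: if `Xₙ(s) → f(s)` in probability for each `s ∈ [0,τ]`, `f`
integrable, and for each `δ > 0` there is an integrable dominating function
`k_δ ≥ 0` with `liminfₙ P(|Xₙ(s)| ≤ k_δ(s) ∀ s) ≥ 1 − δ`, then
`sup_{t∈[0,τ]} |∫_0^t Xₙ − ∫_0^t f| → 0` in probability. -/
theorem gill_lemma
    {Ω : Type*} [MeasurableSpace Ω] (μ : Measure Ω) [IsProbabilityMeasure μ]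
    (τ : ℝ) (hτ : 0 ≤ τ)
    (X : ℕ → ℝ → Ω → ℝ) (f : ℝ → ℝ)
    (hX_meas : ∀ n, Measurable (Function.uncurry (X n)))
    (hX_int : ∀ n, ∀ᵐ ω ∂μ, IntegrableOn (fun s => X n s ω) (Set.Icc 0 τ))
    (hf_int : IntegrableOn f (Set.Icc 0 τ))
    (hconv : ∀ s ∈ Set.Icc (0:ℝ) τ, ∀ ε > (0:ℝ),
      Tendsto (fun n => μ {ω | ε < |X n s ω - f s|}) atTop (nhds 0))
    (hdom : ∀ δ > (0:ℝ), ∃ k : ℝ → ℝ,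
      IntegrableOn k (Set.Icc 0 τ) ∧ (∀ s, 0 ≤ k s) ∧
      (1 : ENNReal) - ENNReal.ofReal δ ≤
        atTop.liminf (fun n => μ {ω | ∀ s ∈ Set.Icc (0:ℝ) τ, |X n s ω| ≤ k s})) :
    ∀ ε > (0:ℝ), Tendsto
      (fun n => μ {ω | ε < ⨆ t ∈ Set.Icc (0:ℝ) τ,
          |(∫ s in (0:ℝ)..t, X n s ω) - ∫ s in (0:ℝ)..t, f s|})
      atTop (nhds 0) :=
  gill_lemma_general μ τ X f hX_meas hX_int hf_int hconv hdom
end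

section
/- Turnbull's interval lemma: Let (L_i, R_i], i = 1,...,n, be interval-censoring observation intervals, and let s_0 < s_1 < ... < s_m be the ordered distinct elements of {0} ∪ {L_i} ∪ {R_i}. Any probability vector p = (p_1,...,p_m) with p_j interpreted as mass on (s_{j−1}, s_j] maximizing the likelihood L(p) = ∏_{i=1}^n (∑_{j: (s_{j−1},s_j] ⊆ (L_i,R_i]} p_j) can place positive mass p_j > 0 only on intervals (s_{j−1}, s_j] with s_{j−1} ∈ {L_1,...,L_n} and s_j ∈ {R_1,...,R_n}. -/
/-!
Moving the mass of a cell `j` to a cell `j'` that lies in every observation interval containing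
`j`, and in at least one more, leaves each factor of the likelihood unchanged or larger and
strictly increases one of them. At a maximizer all factors are positive, so this is impossible
unless `p j = 0`. For a non-Turnbull cell such a `j'` is a neighbour: if its left end is not an
`Lᵢ`, it is positive, hence some `Rₖ`, and the cell to its left lies in every observation
containing `j` and in observation `k`, which misses `j`; symmetrically on the right. A cell in no
observation can give its mass to any cell of any observation.
-/

open Finset

section Likelihood

variable {ι κ : Type*}

noncomputable def censoredLikelihood [Fintype κ] (F : κ → Finset ι) (q : ι → ℝ) : ℝ :=
  ∏ i, ∑ k ∈ F i, q k

theorem sum_add_single_sub_single [DecidableEq ι] (q : ι → ℝ) (s : Finset ι) (j j' : ι)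
    (a : ℝ) :
    ∑ k ∈ s, (q + Pi.single j' a - Pi.single j a : ι → ℝ) k =
      ∑ k ∈ s, q k + (if j' ∈ s then a else 0) - (if j ∈ s then a else 0) := by
  simp only [Pi.sub_apply, Pi.add_apply, sum_sub_distrib, sum_add_distrib, sum_pi_single']

variable [Fintype ι] [Fintype κ]

theorem sum_pos_of_isMaxOn {F : κ → Finset ι} (hF : ∀ i, (F i).Nonempty) {p : ι → ℝ}
    (hp : p ∈ stdSimplex ℝ ι) (hmax : IsMaxOn (censoredLikelihood F) (stdSimplex ℝ ι) p)
    (i : κ) : 0 < ∑ k ∈ F i, p k := by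
  have : Nonempty ι := (hF i).to_subtype.map Subtype.val
  have hbary : 0 < censoredLikelihood F (stdSimplex.barycenter : stdSimplex ℝ ι).val :=
    prod_pos fun i' _ =>
      sum_pos (fun k _ => by rw [stdSimplex.barycenter_apply]; positivity) (hF i')
  have hpos : censoredLikelihood F p ≠ 0 := (hbary.trans_le (hmax (Subtype.prop _))).ne'
  exact (sum_nonneg fun k _ => hp.1 k).lt_of_ne'
    (prod_ne_zero_iff.mp hpos i (mem_univ i))

theorem add_single_sub_single_mem_stdSimplex [DecidableEq ι] {p : ι → ℝ}
    (hp : p ∈ stdSimplex ℝ ι) (j j' : ι) :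
    p + Pi.single j' (p j) - Pi.single j (p j) ∈ stdSimplex ℝ ι := by
  refine ⟨fun k => ?_, ?_⟩
  · have := hp.1 k
    have := hp.1 j
    simp only [Pi.sub_apply, Pi.add_apply, Pi.single_apply]
    split_ifs <;> subst_vars <;> linarith
  · rw [← hp.2, sum_add_single_sub_single]
    simp

theorem eq_zero_of_isMaxOn_of_ssubset {F : κ → Finset ι} (hF : ∀ i, (F i).Nonempty)
    {p : ι → ℝ} (hp : p ∈ stdSimplex ℝ ι)
    (hmax : IsMaxOn (censoredLikelihood F) (stdSimplex ℝ ι) p) {j j' : ι}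
    (hjj' : {i | j ∈ F i} ⊂ {i | j' ∈ F i}) : p j = 0 := by
  classical
  obtain ⟨i₀, hi₀j' : j' ∈ F i₀, hi₀j : j ∉ F i₀⟩ := Set.exists_of_ssubset hjj'
  by_contra hpj
  have hpj : 0 < p j := (hp.1 j).lt_of_ne' hpj
  set q : ι → ℝ := p + Pi.single j' (p j) - Pi.single j (p j)
  have hle : ∀ i ∈ univ, ∑ k ∈ F i, p k ≤ ∑ k ∈ F i, q k := by
    intro i _
    rw [sum_add_single_sub_single]
    by_cases hi : j ∈ F i
    · have hi' : j' ∈ F i := hjj'.subset hi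
      simp [hi, hi']
    · by_cases hi' : j' ∈ F i <;> simp [hi, hi', hpj.le]
  have hlt : ∑ k ∈ F i₀, p k < ∑ k ∈ F i₀, q k := by
    rw [sum_add_single_sub_single]
    simpa [hi₀j', hi₀j] using hpj
  exact (hmax (add_single_sub_single_mem_stdSimplex hp j j')).not_gt <|
    prod_lt_prod (fun i _ => sum_pos_of_isMaxOn hF hp hmax i) hle ⟨i₀, mem_univ _, hlt⟩

end Likelihood

section Grid

variable {m : ℕ}

/-- The cells `(s j, s (j + 1)]` of a grid `s : Fin (m + 1) → ℝ` that lie in `(s a, s b]`. -/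
def gridCells (a b : Fin (m + 1)) : Finset (Fin m) :=
  univ.filter fun j => a ≤ j.castSucc ∧ j.succ ≤ b

theorem mem_gridCells {a b : Fin (m + 1)} {j : Fin m} :
    j ∈ gridCells a b ↔ (a : ℕ) ≤ j ∧ (j : ℕ) + 1 ≤ b := by
  simp [gridCells, Fin.le_iff_val_le_val]

theorem gridCells_nonempty {a b : Fin (m + 1)} (h : a < b) : (gridCells a b).Nonempty := by
  rw [Fin.lt_def] at h
  exact ⟨⟨a, by omega⟩, mem_gridCells.2 ⟨le_rfl, h⟩⟩

variable {κ : Type*} {l r : κ → Fin (m + 1)}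

theorem exists_ssubset_of_castSucc_notMem_range (hlr : ∀ i, l i < r i)
    (hcover : ∀ a, a ≠ 0 → a ∈ Set.range l ∨ a ∈ Set.range r) {j : Fin m} {i₁ : κ}
    (hi₁ : j ∈ gridCells (l i₁) (r i₁)) (hj : j.castSucc ∉ Set.range l) :
    ∃ j', {i | j ∈ gridCells (l i) (r i)} ⊂ {i | j' ∈ gridCells (l i) (r i)} := by
  have hlt : ∀ i, j ∈ gridCells (l i) (r i) → (l i : ℕ) < j := fun i hi =>
    (mem_gridCells.1 hi).1.lt_of_ne fun h => hj ⟨i, Fin.ext h⟩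
  have hj0 : (j : ℕ) ≠ 0 := by have := hlt i₁ hi₁; omega
  obtain ⟨k, hk⟩ : j.castSucc ∈ Set.range r :=
    (hcover _ (by simpa [Fin.ext_iff] using hj0)).resolve_left hj
  have hlk : (l k : ℕ) < j := by simpa [hk, Fin.lt_def] using hlr k
  rw [Fin.ext_iff, Fin.val_castSucc] at hk
  refine ⟨⟨j - 1, by omega⟩, (Set.ssubset_iff_of_subset fun i hi => ?_).2 ⟨k, ?_, ?_⟩⟩
  · have := hlt i hi
    simp only [Set.mem_ofPred_eq, mem_gridCells] at hi ⊢
    omega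
  all_goals simp only [Set.mem_ofPred_eq, mem_gridCells]; omega

theorem exists_ssubset_of_succ_notMem_range (hlr : ∀ i, l i < r i)
    (hcover : ∀ a, a ≠ 0 → a ∈ Set.range l ∨ a ∈ Set.range r) {j : Fin m} {i₁ : κ}
    (hi₁ : j ∈ gridCells (l i₁) (r i₁)) (hj : j.succ ∉ Set.range r) :
    ∃ j', {i | j ∈ gridCells (l i) (r i)} ⊂ {i | j' ∈ gridCells (l i) (r i)} := by
  have hlt : ∀ i, j ∈ gridCells (l i) (r i) → (j : ℕ) + 1 < r i := fun i hi =>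
    (mem_gridCells.1 hi).2.lt_of_ne fun h => hj ⟨i, Fin.ext h.symm⟩
  have hjm : (j : ℕ) + 1 < m := by have := hlt i₁ hi₁; omega
  obtain ⟨k, hk⟩ : j.succ ∈ Set.range l :=
    (hcover _ (Fin.succ_ne_zero j)).resolve_right hj
  have hkr := hlr k
  rw [hk, Fin.lt_def, Fin.val_succ] at hkr
  rw [Fin.ext_iff, Fin.val_succ] at hk
  refine ⟨⟨j + 1, hjm⟩, (Set.ssubset_iff_of_subset fun i hi => ?_).2 ⟨k, ?_, ?_⟩⟩
  · have := hlt i hi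
    simp only [Set.mem_ofPred_eq, mem_gridCells] at hi ⊢
    omega
  all_goals simp only [Set.mem_ofPred_eq, mem_gridCells]; omega

theorem exists_ssubset_of_not_turnbull (hlr : ∀ i, l i < r i)
    (hcover : ∀ a, a ≠ 0 → a ∈ Set.range l ∨ a ∈ Set.range r) {j : Fin m}
    (hj : ¬(j.castSucc ∈ Set.range l ∧ j.succ ∈ Set.range r)) :
    ∃ j', {i | j ∈ gridCells (l i) (r i)} ⊂ {i | j' ∈ gridCells (l i) (r i)} := by
  by_cases hcov : ∃ i₁, j ∈ gridCells (l i₁) (r i₁)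
  · obtain ⟨i₁, hi₁⟩ := hcov
    rcases not_and_or.1 hj with hj | hj
    · exact exists_ssubset_of_castSucc_notMem_range hlr hcover hi₁ hj
    · exact exists_ssubset_of_succ_notMem_range hlr hcover hi₁ hj
  · obtain ⟨i₁⟩ : Nonempty κ := by
      rcases hcover _ (Fin.succ_ne_zero j) with ⟨i, -⟩ | ⟨i, -⟩ <;> exact ⟨i⟩
    obtain ⟨j', hj'⟩ := gridCells_nonempty (hlr i₁)
    refine ⟨j', ?_⟩
    have hempty : {i | j ∈ gridCells (l i) (r i)} = ∅ :=
      Set.eq_empty_of_forall_notMem fun i hi => hcov ⟨i, hi⟩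
    rw [hempty]
    exact Set.empty_ssubset.2 ⟨i₁, hj'⟩

end Grid

theorem exists_indices_of_range_eq {κ : Type*} {m : ℕ} {L R : κ → ℝ}
    (hLR : ∀ i, 0 ≤ L i ∧ L i < R i) {s : Fin (m + 1) → ℝ} (hs : StrictMono s)
    (hs_range : Set.range s = {0} ∪ Set.range L ∪ Set.range R) :
    ∃ l r : κ → Fin (m + 1), s ∘ l = L ∧ s ∘ r = R ∧
      ∀ a, a ≠ 0 → a ∈ Set.range l ∨ a ∈ Set.range r := by
  have hmem : ∀ x, x ∈ Set.range s ↔ x = 0 ∨ x ∈ Set.range L ∨ x ∈ Set.range R := by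
    intro x
    rw [hs_range]
    simp only [Set.mem_union, Set.mem_singleton_iff, or_assoc]
  choose l hl using fun i => (hmem (L i)).2 (Or.inr (Or.inl ⟨i, rfl⟩))
  choose r hr using fun i => (hmem (R i)).2 (Or.inr (Or.inr ⟨i, rfl⟩))
  refine ⟨l, r, funext hl, funext hr, fun a ha => ?_⟩
  have hs0 : 0 ≤ s 0 := by
    rcases (hmem (s 0)).1 ⟨0, rfl⟩ with h | ⟨i, hi⟩ | ⟨i, hi⟩
    · exact h.ge
    · exact hi ▸ (hLR i).1
    · exact hi ▸ (hLR i).1.trans (hLR i).2.le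
  have hsa : s a ≠ 0 := (hs0.trans_lt (hs (Fin.pos_of_ne_zero ha))).ne'
  rcases ((hmem (s a)).1 ⟨a, rfl⟩).resolve_left hsa with ⟨i, hi⟩ | ⟨i, hi⟩
  · exact Or.inl ⟨i, hs.injective ((hl i).trans hi)⟩
  · exact Or.inr ⟨i, hs.injective ((hr i).trans hi)⟩

/-- Turnbull's interval lemma: any maximizer of the interval-censoring
likelihood over the probability simplex places mass only on Turnbull
intervals, i.e. intervals `(s_{j−1}, s_j]` with `s_{j−1}` a left endpoint
`Lᵢ` and `s_j` a right endpoint `Rₖ` of some observations. -/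
theorem turnbull_intervals
    (n m : ℕ) (L R : Fin n → ℝ)
    (hLR : ∀ i, 0 ≤ L i ∧ L i < R i)
    (s : Fin (m + 1) → ℝ)
    (hs_mono : StrictMono s)
    (hs_range : Set.range s = {0} ∪ Set.range L ∪ Set.range R)
    (Lik : (Fin m → ℝ) → ℝ)
    (hLik : ∀ p, Lik p = ∏ i : Fin n,
      ∑ j ∈ Finset.univ.filter
        (fun j : Fin m => L i ≤ s j.castSucc ∧ s j.succ ≤ R i), p j)
    (p : Fin m → ℝ)
    (hp_nonneg : ∀ j, 0 ≤ p j) (hp_sum : ∑ j, p j = 1)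
    (hp_max : ∀ q : Fin m → ℝ, (∀ j, 0 ≤ q j) → (∑ j, q j = 1) →
      Lik q ≤ Lik p) :
    ∀ j : Fin m,
      ¬ (s j.castSucc ∈ Set.range L ∧ s j.succ ∈ Set.range R) → p j = 0 := by
  obtain ⟨l, r, rfl, rfl, hcover⟩ := exists_indices_of_range_eq hLR hs_mono hs_range
  have hlr : ∀ i, l i < r i := fun i => hs_mono.lt_iff_lt.1 (hLR i).2
  have hLik_eq : Lik = censoredLikelihood fun i => gridCells (l i) (r i) := by
    funext q
    simp only [hLik, censoredLikelihood, gridCells, Function.comp_apply, hs_mono.le_iff_le]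
  have hmax : IsMaxOn Lik (stdSimplex ℝ (Fin m)) p := fun q hq => hp_max q hq.1 hq.2
  intro j hj
  simp only [Set.range_comp, hs_mono.injective.mem_set_image] at hj
  obtain ⟨j', hjj'⟩ := exists_ssubset_of_not_turnbull hlr hcover hj
  exact eq_zero_of_isMaxOn_of_ssubset (fun i => gridCells_nonempty (hlr i))
    ⟨hp_nonneg, hp_sum⟩ (hLik_eq ▸ hmax) hjj'
end
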